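/- The cutoff cubic Dirac operator 𝔻 = Σ_{i,j} e_{ij}γ_{ji} + (1/3)Σ_{i,j} :s_{ij}γ_{ji}: satisfies [𝔻, γ_{ij}]₊ = 2t_{ij}, where t_{ij} = e_{ij} + s_{ij}. -/

import Mathlib

open Finset

/-- The cutoff index set `[-N, N] ⊂ ℤ`. -/
noncomputable def cutoff (N : ℕ) : Finset ℤ := Finset.Icc (-(N : ℤ)) (N : ℤ)

/-- The normal-ordered spin operators
`s_{ij} = (1/2) Σ_m γ_{im}γ_{mj} − (N − i + 1/2)δ_{ij}`. -/
noncomputable def spinOp {A : Type*} [Ring A] [Algebra ℚ A] (N : ℕ)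
    (γ : ℤ → ℤ → A) (i j : ℤ) : A :=
  (2 : ℚ)⁻¹ • ∑ l ∈ cutoff N, γ i l * γ l j -
    (if i = j then ((N : ℚ) - (i : ℚ) + (2 : ℚ)⁻¹) • (1 : A) else 0)

/-- The normal-ordered cubic sum
`Σ_{i,j} :s_{ij}γ_{ji}: = Σ_{i>j} s_{ij}γ_{ji} + Σ_{i≤j} γ_{ji}s_{ij}`. -/
noncomputable def normalOrderedCubic {A : Type*} [Ring A] [Algebra ℚ A] (N : ℕ)
    (γ : ℤ → ℤ → A) : A :=
  ∑ i ∈ cutoff N, ∑ j ∈ cutoff N,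
    if j < i then spinOp N γ i j * γ j i else γ j i * spinOp N γ i j

/-- The cutoff cubic Dirac operator
`𝔻 = Σ_{i,j} e_{ij}γ_{ji} + (1/3) Σ_{i,j} :s_{ij}γ_{ji}:`. -/
noncomputable def cubicDirac {A : Type*} [Ring A] [Algebra ℚ A] (N : ℕ)
    (E γ : ℤ → ℤ → A) : A :=
  (∑ i ∈ cutoff N, ∑ j ∈ cutoff N, E i j * γ j i) +
    (3 : ℚ)⁻¹ • normalOrderedCubic N γ

/-- The total current `t_{ij} = e_{ij} + s_{ij}`. -/
noncomputable def totalCurrent {A : Type*} [Ring A] [Algebra ℚ A] (N : ℕ)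
    (E γ : ℤ → ℤ → A) (i j : ℤ) : A :=
  E i j + spinOp N γ i j

/-! The spin operators act on the `γ`'s by `[s_{ab}, γ_{ij}] = δ_{bi} γ_{aj} − δ_{aj} γ_{ib}`, which with
the Clifford relations gives `{Σ e_{ab} γ_{ba}, γ_{ij}} = 2 e_{ij}` and
`{Σ s_{ab} γ_{ba}, γ_{ij}} = 6 s_{ij} − 4 i δ_{ij}`. Normal ordering moves `γ_{ba}` past `s_{ab}` at the
cost of `γ_{bb} − γ_{aa}`; over the symmetric interval `[−N, N]` these corrections add up to
`Σ_c 2c γ_{cc}`, whose anticommutator with `γ_{ij}` is exactly the missing `4 i δ_{ij}`. -/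

theorem sum_sum_ite_and_eq {M : Type*} [AddCommMonoid M] {s t : Finset ℤ} {i j : ℤ}
    (hi : i ∈ s) (hj : j ∈ t) (f : ℤ → ℤ → M) :
    ∑ a ∈ s, ∑ b ∈ t, (if a = i ∧ b = j then f a b else 0) = f i j := by
  simp [ite_and, sum_ite_eq', hi, hj]

theorem sum_cutoff_sum_cutoff_ite_le_sub {M : Type*} [AddCommGroup M] (n : ℕ) (g : ℤ → M) :
    ∑ a ∈ cutoff n, ∑ b ∈ cutoff n, (if a ≤ b then g b - g a else 0) =
      ∑ c ∈ cutoff n, (2 * c) • g c := by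
  have count_le : ∀ c ∈ cutoff n, (#{a ∈ cutoff n | a ≤ c} : ℤ) = c + n + 1 := by
    intro c hc
    rw [cutoff, mem_Icc] at hc
    rw [show {a ∈ cutoff n | a ≤ c} = Icc (-(n : ℤ)) c by ext; simp [cutoff]; omega,
      Int.card_Icc]
    omega
  have count_ge : ∀ c ∈ cutoff n, (#{b ∈ cutoff n | c ≤ b} : ℤ) = n - c + 1 := by
    intro c hc
    rw [cutoff, mem_Icc] at hc
    rw [show {b ∈ cutoff n | c ≤ b} = Icc c n by ext; simp [cutoff]; omega, Int.card_Icc]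
    omega
  have split : ∀ a b, (if a ≤ b then g b - g a else 0) =
      (if a ≤ b then g b else 0) - (if a ≤ b then g a else 0) := by
    intro a b; split_ifs <;> simp
  simp only [split, sum_sub_distrib]
  rw [sum_comm]
  simp only [← sum_filter, sum_const, ← natCast_zsmul, ← sum_sub_distrib, ← sub_smul]
  refine sum_congr rfl fun c hc => ?_
  rw [count_le c hc, count_ge c hc]
  congr 1
  ring

theorem card_cutoff (N : ℕ) : #(cutoff N) = 2 * N + 1 := by
  rw [cutoff, Int.card_Icc]
  omega

section Clifford

variable {A : Type*} [Ring A]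

def CliffordRelations (N : ℕ) (γ : ℤ → ℤ → A) : Prop :=
  ∀ i ∈ cutoff N, ∀ j ∈ cutoff N, ∀ l ∈ cutoff N, ∀ m ∈ cutoff N,
    γ i j * γ l m + γ l m * γ i j = if i = m ∧ j = l then (2 : A) else 0

variable {N : ℕ} {γ : ℤ → ℤ → A}

theorem sum_gamma_mul_gamma_commutator (hγ : CliffordRelations N γ)
    {a b i j : ℤ} (ha : a ∈ cutoff N) (hb : b ∈ cutoff N) (hi : i ∈ cutoff N)
    (hj : j ∈ cutoff N) :
    (∑ l ∈ cutoff N, γ a l * γ l b) * γ i j - γ i j * ∑ l ∈ cutoff N, γ a l * γ l b =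
      (if b = i then γ a j * 2 else 0) - (if a = j then 2 * γ i b else 0) := by
  have term : ∀ l ∈ cutoff N, γ a l * γ l b * γ i j - γ i j * (γ a l * γ l b) =
      (if l = j then (if b = i then γ a l * 2 else 0) else 0) -
        (if l = i then (if a = j then 2 * γ l b else 0) else 0) := by
    intro l hl
    calc _ = γ a l * (γ l b * γ i j + γ i j * γ l b) -
          (γ a l * γ i j + γ i j * γ a l) * γ l b := by noncomm_ring
      _ = _ := by
        rw [hγ l hl b hb i hi j hj, hγ a ha l hl i hi j hj]
        simp only [mul_ite, ite_mul, mul_zero, zero_mul, ite_and, and_comm (a := a = j)]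
  rw [sum_mul, mul_sum, ← sum_sub_distrib, sum_congr rfl term, sum_sub_distrib, sum_ite_eq',
    sum_ite_eq', if_pos hj, if_pos hi]

theorem sum_gamma_mul_gamma_add_swap (hγ : CliffordRelations N γ) {i j : ℤ}
    (hi : i ∈ cutoff N) (hj : j ∈ cutoff N) :
    ∑ l ∈ cutoff N, γ l j * γ i l + ∑ l ∈ cutoff N, γ i l * γ l j =
      if i = j then (2 * N + 1) • (2 : A) else 0 := by
  rw [← sum_add_distrib, sum_congr rfl fun l hl => hγ l hl j hj i hi l hl]
  simp only [true_and, sum_ite_irrel, sum_const, card_cutoff, smul_zero, eq_comm (a := j)]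

theorem sum_smul_gamma_diag_anticomm (hγ : CliffordRelations N γ) (w : ℤ → ℤ) {i j : ℤ}
    (hi : i ∈ cutoff N) (hj : j ∈ cutoff N) :
    (∑ c ∈ cutoff N, w c • γ c c) * γ i j + γ i j * ∑ c ∈ cutoff N, w c • γ c c =
      if i = j then w i • (2 : A) else 0 := by
  simp only [sum_mul, mul_sum, ← sum_add_distrib, smul_mul_assoc, mul_smul_comm, ← smul_add]
  rw [sum_congr rfl fun c hc => congrArg (w c • ·) (hγ c hc c hc i hi j hj)]
  simp only [smul_ite, smul_zero, ite_and, sum_ite_eq', hj, if_true, eq_comm (a := j)]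
  split_ifs with h
  · rw [h]
  · rfl

theorem sum_mul_gamma_transpose_anticomm {E : ℤ → ℤ → A} (hγ : CliffordRelations N γ)
    (hcomm : ∀ i ∈ cutoff N, ∀ j ∈ cutoff N, ∀ l ∈ cutoff N, ∀ m ∈ cutoff N,
      E i j * γ l m = γ l m * E i j) {i j : ℤ} (hi : i ∈ cutoff N) (hj : j ∈ cutoff N) :
    (∑ a ∈ cutoff N, ∑ b ∈ cutoff N, E a b * γ b a) * γ i j +
        γ i j * ∑ a ∈ cutoff N, ∑ b ∈ cutoff N, E a b * γ b a = E i j * 2 := by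
  have term : ∀ a ∈ cutoff N, ∀ b ∈ cutoff N,
      E a b * γ b a * γ i j + γ i j * (E a b * γ b a) =
        if a = i ∧ b = j then E a b * 2 else 0 := by
    intro a ha b hb
    rw [← mul_assoc (γ i j), ← hcomm a ha b hb i hi j hj, mul_assoc, mul_assoc, ← mul_add,
      hγ b hb a ha i hi j hj, mul_ite, mul_zero]
    simp only [and_comm]
  simp only [sum_mul, mul_sum, ← sum_add_distrib]
  rw [sum_congr rfl fun a ha => sum_congr rfl (term a ha), sum_sum_ite_and_eq hi hj]

variable [Algebra ℚ A]

theorem spinOp_commutator_gamma (hγ : CliffordRelations N γ)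
    {a b i j : ℤ} (ha : a ∈ cutoff N) (hb : b ∈ cutoff N) (hi : i ∈ cutoff N)
    (hj : j ∈ cutoff N) :
    spinOp N γ a b * γ i j - γ i j * spinOp N γ a b =
      (if b = i then γ a j else 0) - (if a = j then γ i b else 0) := by
  have hQ := sum_gamma_mul_gamma_commutator hγ ha hb hi hj
  simp only [spinOp, sub_mul, mul_sub, smul_mul_assoc, mul_smul_comm, ite_mul, mul_ite,
    zero_mul, mul_zero, one_mul, mul_one]
  rw [sub_sub_sub_cancel_right, ← smul_sub, hQ, mul_two, two_mul]
  split_ifs <;> module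

theorem gamma_mul_spinOp (hγ : CliffordRelations N γ) {a b : ℤ} (ha : a ∈ cutoff N)
    (hb : b ∈ cutoff N) :
    γ b a * spinOp N γ a b = spinOp N γ a b * γ b a - γ a a + γ b b := by
  have h := spinOp_commutator_gamma hγ ha hb hb ha
  simp only [if_true] at h
  rw [sub_add, ← h, sub_sub_cancel]

theorem normalOrderedCubic_eq (hγ : CliffordRelations N γ) :
    normalOrderedCubic N γ =
      ∑ a ∈ cutoff N, ∑ b ∈ cutoff N, spinOp N γ a b * γ b a +
        ∑ c ∈ cutoff N, (2 * c) • γ c c := by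
  have term : ∀ a ∈ cutoff N, ∀ b ∈ cutoff N,
      (if b < a then spinOp N γ a b * γ b a else γ b a * spinOp N γ a b) =
        spinOp N γ a b * γ b a + if a ≤ b then γ b b - γ a a else 0 := by
    intro a ha b hb
    by_cases hab : b < a
    · rw [if_pos hab, if_neg (not_le.mpr hab), add_zero]
    · rw [if_neg hab, if_pos (not_lt.mp hab), gamma_mul_spinOp hγ ha hb]
      abel
  rw [normalOrderedCubic, ← sum_cutoff_sum_cutoff_ite_le_sub N fun c => γ c c, ← sum_add_distrib]
  exact sum_congr rfl fun a ha => by rw [← sum_add_distrib]; exact sum_congr rfl (term a ha)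

theorem sum_spinOp_mul_gamma_anticomm (hγ : CliffordRelations N γ) {i j : ℤ}
    (hi : i ∈ cutoff N) (hj : j ∈ cutoff N) :
    (∑ a ∈ cutoff N, ∑ b ∈ cutoff N, spinOp N γ a b * γ b a) * γ i j +
        γ i j * ∑ a ∈ cutoff N, ∑ b ∈ cutoff N, spinOp N γ a b * γ b a =
      spinOp N γ i j * 2 + ∑ l ∈ cutoff N, γ i l * γ l j - ∑ l ∈ cutoff N, γ l j * γ i l := by
  have term : ∀ a ∈ cutoff N, ∀ b ∈ cutoff N,
      spinOp N γ a b * γ b a * γ i j + γ i j * (spinOp N γ a b * γ b a) =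
        (if a = i ∧ b = j then spinOp N γ a b * 2 else 0) +
          (if a = j then γ i b * γ b a else 0) - (if b = i then γ a j * γ b a else 0) := by
    intro a ha b hb
    calc _ = spinOp N γ a b * (γ b a * γ i j + γ i j * γ b a) -
          (spinOp N γ a b * γ i j - γ i j * spinOp N γ a b) * γ b a := by noncomm_ring
      _ = _ := by
        rw [hγ b hb a ha i hi j hj, spinOp_commutator_gamma hγ ha hb hi hj]
        simp only [mul_ite, ite_mul, sub_mul, mul_zero, zero_mul, and_comm (a := b = j)]
        abel
  simp only [sum_mul, mul_sum, ← sum_add_distrib]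
  rw [sum_congr rfl fun a ha => sum_congr rfl (term a ha)]
  simp only [sum_add_distrib, sum_sub_distrib, sum_sum_ite_and_eq hi hj, sum_ite_irrel,
    sum_const_zero, sum_ite_eq', hi, hj, if_true]

theorem normalOrderedCubic_anticomm_gamma (hγ : CliffordRelations N γ) {i j : ℤ}
    (hi : i ∈ cutoff N) (hj : j ∈ cutoff N) :
    normalOrderedCubic N γ * γ i j + γ i j * normalOrderedCubic N γ =
      (6 : ℚ) • spinOp N γ i j := by
  rw [normalOrderedCubic_eq hγ, add_mul, mul_add, add_add_add_comm,
    sum_spinOp_mul_gamma_anticomm hγ hi hj, sum_smul_gamma_diag_anticomm hγ _ hi hj,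
    eq_sub_of_add_eq (sum_gamma_mul_gamma_add_swap hγ hi hj)]
  unfold spinOp
  simp only [mul_two]
  split_ifs with hij
  · subst hij
    have two : (2 : A) = (2 : ℚ) • 1 := by rw [two_smul, one_add_one_eq_two]
    rw [two, ← Nat.cast_smul_eq_nsmul ℚ, ← Int.cast_smul_eq_zsmul ℚ]
    push_cast
    module
  · module

end Clifford

theorem dirac_anticommutator_gamma_general {A : Type*} [Ring A] [Algebra ℚ A]
    (N : ℕ) (E γ : ℤ → ℤ → A)
    (hγ : ∀ i ∈ cutoff N, ∀ j ∈ cutoff N, ∀ l ∈ cutoff N, ∀ m ∈ cutoff N,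
      γ i j * γ l m + γ l m * γ i j = if i = m ∧ j = l then (2 : A) else 0)
    (hcomm : ∀ i ∈ cutoff N, ∀ j ∈ cutoff N, ∀ l ∈ cutoff N, ∀ m ∈ cutoff N,
      E i j * γ l m = γ l m * E i j)
    (i : ℤ) (hi : i ∈ cutoff N) (j : ℤ) (hj : j ∈ cutoff N) :
    cubicDirac N E γ * γ i j + γ i j * cubicDirac N E γ =
      (2 : ℚ) • totalCurrent N E γ i j := by
  rw [cubicDirac, totalCurrent, add_mul, mul_add, add_add_add_comm, smul_mul_assoc,
    mul_smul_comm, ← smul_add, sum_mul_gamma_transpose_anticomm hγ hcomm hi hj,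
    normalOrderedCubic_anticomm_gamma hγ hi hj, smul_smul, mul_two]
  module

/-- The cutoff cubic Dirac operator satisfies `[𝔻, γ_{ij}]₊ = 2 t_{ij}` where
`t_{ij} = e_{ij} + s_{ij}`; the `e`-sector has relations of level `k` and commutes
with the Clifford sector. -/
theorem dirac_anticommutator_gamma {A : Type*} [Ring A] [Algebra ℚ A]
    (N : ℕ) (k : ℤ) (E γ : ℤ → ℤ → A)
    (hγ : ∀ i ∈ cutoff N, ∀ j ∈ cutoff N, ∀ l ∈ cutoff N, ∀ m ∈ cutoff N,
      γ i j * γ l m + γ l m * γ i j = if i = m ∧ j = l then (2 : A) else 0)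
    (hE : ∀ i ∈ cutoff N, ∀ j ∈ cutoff N, ∀ l ∈ cutoff N, ∀ m ∈ cutoff N,
      E i j * E l m - E l m * E i j =
        (if j = l then E i m else 0) - (if i = m then E l j else 0) +
          (if j = l ∧ i = m then ((k * (l - i) : ℤ) : ℚ) • (1 : A) else 0))
    (hcomm : ∀ i ∈ cutoff N, ∀ j ∈ cutoff N, ∀ l ∈ cutoff N, ∀ m ∈ cutoff N,
      E i j * γ l m = γ l m * E i j)
    (i : ℤ) (hi : i ∈ cutoff N) (j : ℤ) (hj : j ∈ cutoff N) :
    cubicDirac N E γ * γ i j + γ i j * cubicDirac N E γ =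
      (2 : ℚ) • totalCurrent N E γ i j :=
  dirac_anticommutator_gamma_general N E γ hγ hcomm i hi j hj
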